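/- arXiv:2201.00489 — 3 statements merged into one kernel-verified Lean document; each statement's English description precedes it below -/
import Mathlib

section
/- Let f : ℕ → ℕ and define g(q) = min(f(q), ⌈q^{3/2}⌉). If f is such that q ↦ f(q)/q is nondecreasing, then q ↦ g(q)/q is nondecreasing, and if additionally Σ 1/f(q) < ∞ then Σ 1/g(q) < ∞. -/
/-! Taking a minimum preserves both properties: `min a b / q = min (a / q) (b / q)` and
`1 / min a b ≤ 1 / a + 1 / b`. So it suffices that `c q = ⌈q^{3/2}⌉` has `c q / q` nondecreasing
and `∑ 1 / c q < ∞`. The latter follows from `c q ≥ q^{3/2}`. For the former,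
`c q / q < √q + 1 / q ≤ √(q + 1) ≤ c (q + 1) / (q + 1)` once `q ≥ 5`, and the cases `q ≤ 4` are
read off the values `1, 3, 6, 8, 12` of `c`. -/

open Real

lemma Real.rpow_three_halves {x : ℝ} (hx : 0 ≤ x) : x ^ (3 / 2 : ℝ) = x * √x := by
  rw [show (3 / 2 : ℝ) = 1 + 1 / 2 by norm_num, rpow_add' hx (by norm_num), rpow_one,
    sqrt_eq_rpow]

lemma Nat.ceil_rpow_three_halves_eq {n m : ℕ} (hm : 0 < m) (hlt : (m - 1) ^ 2 < n ^ 3)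
    (hle : n ^ 3 ≤ m ^ 2) : ⌈(n : ℝ) ^ (3 / 2 : ℝ)⌉₊ = m := by
  have hsqrt : (n : ℝ) ^ (3 / 2 : ℝ) = √((n : ℝ) ^ 3) := by
    rw [sqrt_eq_rpow, ← rpow_natCast, ← rpow_mul n.cast_nonneg]
    norm_num
  rw [hsqrt, Nat.ceil_eq_iff hm.ne', lt_sqrt (Nat.cast_nonneg _),
    sqrt_le_left (Nat.cast_nonneg _)]
  exact ⟨by exact_mod_cast hlt, by exact_mod_cast hle⟩

lemma Real.mul_sqrt_add_one_le_mul_sqrt_add_one {x : ℝ} (hx : 5 ≤ x) :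
    x * √x + 1 ≤ x * √(x + 1) := by
  have ha := sqrt_nonneg x
  have hb := sqrt_nonneg (x + 1)
  have ha2 := sq_sqrt (show 0 ≤ x by linarith)
  have hb2 := sq_sqrt (show 0 ≤ x + 1 by linarith)
  have hab : √x ≤ √(x + 1) := sqrt_le_sqrt (by linarith)
  -- `x (√(x+1) - √x) = x / (√(x+1) + √x)`, and `√(x+1) + √x ≤ 2√(x+1) ≤ x` once `x ≥ 5`.
  have hsum : √x + √(x + 1) ≤ x := by nlinarith
  nlinarith [mul_nonneg (sub_nonneg.2 hsum) (sub_nonneg.2 hab)]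

lemma Real.natCeil_rpow_three_halves_div_le_of_five_le {x : ℝ} (hx : 5 ≤ x) :
    (⌈x ^ (3 / 2 : ℝ)⌉₊ : ℝ) / x ≤ ⌈(x + 1) ^ (3 / 2 : ℝ)⌉₊ / (x + 1) := by
  have hx0 : 0 < x := by linarith
  have hx1 : 0 < x + 1 := by linarith
  calc (⌈x ^ (3 / 2 : ℝ)⌉₊ : ℝ) / x
      ≤ (x * √x + 1) / x := by
        gcongr
        rw [← rpow_three_halves hx0.le]
        exact (Nat.ceil_lt_add_one (by positivity)).le
    _ ≤ √(x + 1) := by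
        rw [div_le_iff₀ hx0, mul_comm (√(x + 1))]
        exact mul_sqrt_add_one_le_mul_sqrt_add_one hx
    _ = (x + 1) ^ (3 / 2 : ℝ) / (x + 1) := by
        rw [rpow_three_halves hx1.le, mul_div_cancel_left₀ _ hx1.ne']
    _ ≤ ⌈(x + 1) ^ (3 / 2 : ℝ)⌉₊ / (x + 1) := by
        gcongr
        exact Nat.le_ceil _

lemma Nat.ceil_rpow_three_halves_div_le {q : ℕ} (hq : 1 ≤ q) :
    (⌈(q : ℝ) ^ (3 / 2 : ℝ)⌉₊ : ℝ) / q ≤ ⌈((q : ℝ) + 1) ^ (3 / 2 : ℝ)⌉₊ / ((q : ℝ) + 1) := by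
  rcases le_or_gt 5 q with h5 | h5
  · exact Real.natCeil_rpow_three_halves_div_le_of_five_le (by exact_mod_cast h5)
  have c1 : ⌈((1 : ℕ) : ℝ) ^ (3 / 2 : ℝ)⌉₊ = 1 :=
    ceil_rpow_three_halves_eq (by norm_num) (by norm_num) (by norm_num)
  have c2 : ⌈((2 : ℕ) : ℝ) ^ (3 / 2 : ℝ)⌉₊ = 3 :=
    ceil_rpow_three_halves_eq (by norm_num) (by norm_num) (by norm_num)
  have c3 : ⌈((3 : ℕ) : ℝ) ^ (3 / 2 : ℝ)⌉₊ = 6 :=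
    ceil_rpow_three_halves_eq (by norm_num) (by norm_num) (by norm_num)
  have c4 : ⌈((4 : ℕ) : ℝ) ^ (3 / 2 : ℝ)⌉₊ = 8 :=
    ceil_rpow_three_halves_eq (by norm_num) (by norm_num) (by norm_num)
  have c5 : ⌈((5 : ℕ) : ℝ) ^ (3 / 2 : ℝ)⌉₊ = 12 :=
    ceil_rpow_three_halves_eq (by norm_num) (by norm_num) (by norm_num)
  push_cast at c1 c2 c3 c4 c5
  interval_cases q <;> norm_num [c1, c2, c3, c4, c5]

lemma one_div_natCeil_le_one_div {x : ℝ} (hx : 0 ≤ x) : 1 / (⌈x⌉₊ : ℝ) ≤ 1 / x := by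
  rcases hx.eq_or_lt with rfl | hx
  · simp
  · exact one_div_le_one_div_of_le hx (Nat.le_ceil x)

lemma summable_one_div_natCeil_rpow {p : ℝ} (hp : 1 < p) :
    Summable fun n : ℕ => 1 / (⌈(n : ℝ) ^ p⌉₊ : ℝ) :=
  (summable_one_div_nat_rpow.2 hp).of_nonneg_of_le (fun _ => by positivity)
    fun n => one_div_natCeil_le_one_div (by positivity)

lemma one_div_min_le_one_div_add_one_div {a b : ℝ} (ha : 0 ≤ a) (hb : 0 ≤ b) :
    1 / min a b ≤ 1 / a + 1 / b := by
  rcases min_cases a b with ⟨h, -⟩ | ⟨h, -⟩ <;> rw [h]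
  · linarith [one_div_nonneg.2 hb]
  · linarith [one_div_nonneg.2 ha]

lemma Summable.one_div_min {ι : Type*} {a b : ι → ℝ} (ha0 : ∀ i, 0 ≤ a i) (hb0 : ∀ i, 0 ≤ b i)
    (ha : Summable fun i => 1 / a i) (hb : Summable fun i => 1 / b i) :
    Summable fun i => 1 / min (a i) (b i) :=
  (ha.add hb).of_nonneg_of_le (fun i => one_div_nonneg.2 (le_min (ha0 i) (hb0 i)))
    fun i => one_div_min_le_one_div_add_one_div (ha0 i) (hb0 i)

lemma min_div_le_min_div {a b a' b' x y : ℝ} (hx : 0 ≤ x) (hy : 0 ≤ y) (ha : a / x ≤ a' / y)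
    (hb : b / x ≤ b' / y) : min a b / x ≤ min a' b' / y := by
  rw [← min_div_div_right hx, ← min_div_div_right hy]
  exact min_le_min ha hb

theorem stmt_1_general (f : ℕ → ℕ)
    (hmono : ∀ q, 1 ≤ q → (f q : ℝ) / q ≤ (f (q + 1) : ℝ) / (q + 1))
    (hsum : Summable fun q : ℕ => 1 / (f q : ℝ))
    (g : ℕ → ℕ) (hg : ∀ q, g q = min (f q) ⌈(q : ℝ) ^ ((3 : ℝ) / 2)⌉₊) :
    (∀ q, 1 ≤ q → (g q : ℝ) / q ≤ (g (q + 1) : ℝ) / (q + 1)) ∧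
      Summable fun q : ℕ => 1 / (g q : ℝ) := by
  have hg_cast : ∀ q, (g q : ℝ) = min (f q : ℝ) ⌈(q : ℝ) ^ (3 / 2 : ℝ)⌉₊ := fun q => by
    rw [hg, Nat.cast_min]
  refine ⟨fun q hq => ?_, ?_⟩
  · rw [hg_cast, hg_cast, Nat.cast_succ]
    exact min_div_le_min_div q.cast_nonneg (by positivity) (hmono q hq)
      (Nat.ceil_rpow_three_halves_div_le hq)
  · simp only [hg_cast]
    exact hsum.one_div_min (fun _ => Nat.cast_nonneg _) (fun _ => Nat.cast_nonneg _)
      (summable_one_div_natCeil_rpow (by norm_num))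

/-- If `f : ℕ → ℕ` has `f q ≥ 1` for `q ≥ 1`, `q ↦ f q / q` nondecreasing and
`∑ 1 / f q < ∞`, then `g q := min (f q) ⌈q^{3/2}⌉` also has `q ↦ g q / q`
nondecreasing and `∑ 1 / g q < ∞`. -/
theorem stmt_1 (f : ℕ → ℕ) (hf1 : ∀ q, 1 ≤ q → 1 ≤ f q)
    (hmono : ∀ q, 1 ≤ q → (f q : ℝ) / q ≤ (f (q + 1) : ℝ) / (q + 1))
    (hsum : Summable fun q : ℕ => 1 / (f q : ℝ))
    (g : ℕ → ℕ) (hg : ∀ q, g q = min (f q) ⌈(q : ℝ) ^ ((3 : ℝ) / 2)⌉₊) :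
    (∀ q, 1 ≤ q → (g q : ℝ) / q ≤ (g (q + 1) : ℝ) / (q + 1)) ∧
      Summable fun q : ℕ => 1 / (g q : ℝ) :=
  stmt_1_general f hmono hsum g hg
end

section
/- Let T be an invertible measure-preserving transformation of a probability space and B a measurable set. Suppose for each fixed ℓ ∈ ℕ the sequence {ℓ t_n} is mixing for T, i.e. μ(T^{ℓ t_n} A ∩ C) → μ(A)μ(C) for all measurable A, C. Then for any ε > 0 there exist L and N such that for all n ≥ N, ∫ |(1/L) Σ_{ℓ=1}^{L} χ_B∘T^{-ℓ t_n} − μ(B)| dμ < ε. -/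
/-!
Since `χ_B ∘ T^(-ℓ t_n)` is the indicator of `T^(ℓ t_n) B`, the average `f_n` in the statement has
mean `μ B` and variance `L⁻² ∑_{ℓ,ℓ'} (μ (T^(ℓ t_n) B ∩ T^(ℓ' t_n) B) - (μ B)²)`. Measure
preservation turns the off-diagonal terms into `μ (T^((ℓ - ℓ') t_n) B ∩ B) - (μ B)²`, which tend to
`0` by mixing, so the variance tends to `(μ B - (μ B)²) / L ≤ 1 / L`. Since the mean absolute
deviation is at most the standard deviation, any `L > 1 / ε²` works.
-/

open MeasureTheory Filter

def iterZ {α : Type*} [MeasurableSpace α] (T : α ≃ᵐ α) : ℤ → α → α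
  | Int.ofNat n => (⇑T)^[n]
  | Int.negSucc n => (⇑T.symm)^[n + 1]

open ProbabilityTheory Topology

section iterZ

variable {X : Type*} [MeasurableSpace X] (T : X ≃ᵐ X)

theorem iterZ_eq_zpow (k : ℤ) : iterZ T k = ⇑(T.toEquiv ^ k) := by
  cases k with
  | ofNat n => exact (Equiv.Perm.coe_pow _ n).symm
  | negSucc n => rw [zpow_negSucc, ← inv_pow, Equiv.Perm.coe_pow]; rfl

theorem iterZ_add (a b : ℤ) : iterZ T (a + b) = iterZ T a ∘ iterZ T b := by
  simp only [iterZ_eq_zpow, zpow_add, Equiv.Perm.coe_mul]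

theorem image_iterZ (k : ℤ) (S : Set X) : iterZ T k '' S = iterZ T (-k) ⁻¹' S := by
  rw [iterZ_eq_zpow, iterZ_eq_zpow, Equiv.image_eq_preimage_symm, zpow_neg, Equiv.Perm.inv_def]

theorem indicator_one_iterZ (k : ℤ) (S : Set X) (x : X) :
    S.indicator (1 : X → ℝ) (iterZ T k x) = (iterZ T (-k) '' S).indicator 1 x := by
  rw [image_iterZ, neg_neg]
  rfl

theorem measurable_iterZ (k : ℤ) : Measurable (iterZ T k) := by
  cases k with
  | ofNat n => exact T.measurable.iterate n
  | negSucc n => exact T.symm.measurable.iterate (n + 1)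

theorem measurableSet_image_iterZ (k : ℤ) {S : Set X} (hS : MeasurableSet S) :
    MeasurableSet (iterZ T k '' S) := by
  rw [image_iterZ]
  exact measurable_iterZ T (-k) hS

variable {T} {μ : Measure X}

theorem MeasureTheory.MeasurePreserving.iterZ (hT : MeasurePreserving T μ μ) (k : ℤ) :
    MeasurePreserving (iterZ T k) μ μ := by
  cases k with
  | ofNat n => exact hT.iterate n
  | negSucc n => exact (hT.symm T).iterate (n + 1)

theorem measureReal_image_iterZ (hT : MeasurePreserving T μ μ) (k : ℤ) {S : Set X}
    (hS : MeasurableSet S) : μ.real (iterZ T k '' S) = μ.real S := by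
  rw [image_iterZ]
  exact (hT.iterZ (-k)).measureReal_preimage hS.nullMeasurableSet

theorem measureReal_image_iterZ_inter_image_iterZ (hT : MeasurePreserving T μ μ) (a c : ℤ)
    {A C : Set X} (hA : MeasurableSet A) (hC : MeasurableSet C) :
    μ.real (iterZ T a '' A ∩ iterZ T c '' C) = μ.real (iterZ T (a - c) '' A ∩ C) := by
  have hshift : iterZ T a '' A = iterZ T (-c) ⁻¹' (iterZ T (a - c) '' A) := by
    rw [image_iterZ, image_iterZ, ← Set.preimage_comp, ← iterZ_add]
    congr 2
    ring
  rw [hshift, image_iterZ T c, ← Set.preimage_inter]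
  exact (hT.iterZ (-c)).measureReal_preimage
    ((measurableSet_image_iterZ T _ hA).inter hC).nullMeasurableSet

end iterZ

section Indicator

variable {Ω ι : Type*} [MeasurableSpace Ω] {μ : Measure Ω}

section Finite

variable [IsFiniteMeasure μ]

theorem memLp_indicator_one {E : Set Ω} (hE : MeasurableSet E) (p : ENNReal) :
    MemLp (E.indicator (1 : Ω → ℝ)) p μ :=
  (memLp_const 1).indicator hE

theorem integral_const_mul_sum_indicator_one (c : ℝ) (s : Finset ι) {E : ι → Set Ω}
    (hE : ∀ i, MeasurableSet (E i)) :
    ∫ x, c * ∑ i ∈ s, (E i).indicator 1 x ∂μ = c * ∑ i ∈ s, μ.real (E i) := by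
  rw [integral_const_mul, integral_finsetSum _ fun i _ => (integrable_const 1).indicator (hE i)]
  simp only [integral_indicator_one (hE _)]

end Finite

variable [IsProbabilityMeasure μ]

theorem covariance_indicator_one {E F : Set Ω} (hE : MeasurableSet E) (hF : MeasurableSet F) :
    cov[E.indicator 1, F.indicator 1; μ] = μ.real (E ∩ F) - μ.real E * μ.real F := by
  rw [covariance_eq_sub (memLp_indicator_one hE 2) (memLp_indicator_one hF 2),
    ← Set.inter_indicator_one, integral_indicator_one (hE.inter hF), integral_indicator_one hE,
    integral_indicator_one hF]

theorem variance_const_mul_sum_indicator_one (c : ℝ) (s : Finset ι) {E : ι → Set Ω}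
    (hE : ∀ i, MeasurableSet (E i)) :
    Var[fun x => c * ∑ i ∈ s, (E i).indicator 1 x; μ]
      = c ^ 2 * ∑ i ∈ s, ∑ j ∈ s, (μ.real (E i ∩ E j) - μ.real (E i) * μ.real (E j)) := by
  rw [variance_const_mul, variance_fun_sum' fun i _ => memLp_indicator_one (hE i) 2]
  simp only [covariance_indicator_one (hE _) (hE _)]

theorem sq_integral_abs_sub_integral_le_variance {f : Ω → ℝ} (hf : MemLp f 2 μ) :
    (∫ x, |f x - μ[f]| ∂μ) ^ 2 ≤ Var[f; μ] := by
  have hdev : MemLp (fun x => |f x - μ[f]|) 2 μ := (hf.sub (memLp_const _)).abs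
  have h := variance_nonneg (fun x => |f x - μ[f]|) μ
  rw [variance_eq_sub hdev, sub_nonneg] at h
  simpa only [Pi.pow_apply, sq_abs, variance_eq_integral hf.aemeasurable] using h

end Indicator

section Mixing

variable {X : Type*} [MeasurableSpace X] {μ : Measure X} {T : X ≃ᵐ X} {t : ℕ → ℤ} {B : Set X}

theorem tendsto_measureReal_image_iterZ_inter_image_iterZ (hT : MeasurePreserving T μ μ)
    (hB : MeasurableSet B)
    (hmix : ∀ k : ℕ, 1 ≤ k →
      Tendsto (fun n => μ.real (iterZ T (k * t n) '' B ∩ B)) atTop (𝓝 (μ.real B * μ.real B)))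
    {ℓ ℓ' : ℕ} (hne : ℓ ≠ ℓ') :
    Tendsto (fun n => μ.real (iterZ T (ℓ * t n) '' B ∩ iterZ T (ℓ' * t n) '' B)) atTop
      (𝓝 (μ.real B * μ.real B)) := by
  wlog hlt : ℓ' < ℓ generalizing ℓ ℓ'
  · simpa only [Set.inter_comm] using this hne.symm (by omega)
  convert hmix (ℓ - ℓ') (by omega) using 2 with n
  rw [measureReal_image_iterZ_inter_image_iterZ hT _ _ hB hB, Nat.cast_sub hlt.le, sub_mul]

theorem tendsto_variance_average_indicator_image_iterZ [IsProbabilityMeasure μ]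
    (hT : MeasurePreserving T μ μ) (hB : MeasurableSet B)
    (hmix : ∀ k : ℕ, 1 ≤ k →
      Tendsto (fun n => μ.real (iterZ T (k * t n) '' B ∩ B)) atTop (𝓝 (μ.real B * μ.real B)))
    {L : ℕ} (hL : L ≠ 0) :
    Tendsto (fun n => Var[fun x => (1 / (L : ℝ)) *
        ∑ ℓ ∈ Finset.Icc 1 L, (iterZ T (ℓ * t n) '' B).indicator 1 x; μ]) atTop
      (𝓝 ((μ.real B - μ.real B * μ.real B) / L)) := by
  have hlimit_eq : (μ.real B - μ.real B * μ.real B) / L = (1 / (L : ℝ)) ^ 2 *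
      ∑ ℓ ∈ Finset.Icc 1 L, ∑ ℓ' ∈ Finset.Icc 1 L,
        if ℓ = ℓ' then μ.real B - μ.real B * μ.real B else 0 := by
    rw [Finset.sum_congr rfl fun ℓ hℓ => by rw [Finset.sum_ite_eq, if_pos hℓ], Finset.sum_const,
      Nat.card_Icc, Nat.add_sub_cancel, nsmul_eq_mul]
    field_simp
  simp only [variance_const_mul_sum_indicator_one _ _ fun _ => measurableSet_image_iterZ T _ hB,
    measureReal_image_iterZ hT _ hB]
  rw [hlimit_eq]
  refine .const_mul _ (tendsto_finsetSum _ fun ℓ _ => tendsto_finsetSum _ fun ℓ' _ => ?_)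
  split_ifs with h
  · subst h
    simp only [Set.inter_self, measureReal_image_iterZ hT _ hB]
    exact tendsto_const_nhds
  · simpa only [sub_self] using
      (tendsto_measureReal_image_iterZ_inter_image_iterZ hT hB hmix h).sub_const
        (μ.real B * μ.real B)

end Mixing

/-- If for each fixed `ℓ ≥ 1` the sequence `{ℓ t_n}` is mixing for `T`, then for every
`ε > 0` there are `L` and `N` so that for all `n ≥ N`,
`∫ |(1/L) ∑_{ℓ=1}^{L} χ_B ∘ T^{-ℓ t_n} − μ(B)| dμ < ε`. -/
theorem stmt_5 {X : Type*} [MeasurableSpace X] (μ : Measure X) [IsProbabilityMeasure μ]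
    (T : X ≃ᵐ X) (hT : MeasurePreserving T μ μ) (t : ℕ → ℤ)
    (B : Set X) (hB : MeasurableSet B)
    (hmix : ∀ ℓ : ℕ, 1 ≤ ℓ → ∀ A C : Set X, MeasurableSet A → MeasurableSet C →
      Tendsto (fun n => (μ (iterZ T ((ℓ : ℤ) * t n) '' A ∩ C)).toReal) atTop
        (nhds ((μ A).toReal * (μ C).toReal))) :
    ∀ ε : ℝ, 0 < ε → ∃ L N : ℕ, 1 ≤ L ∧ ∀ n, N ≤ n →
      ∫ x, |(1 / (L : ℝ)) * ∑ ℓ ∈ Finset.Icc 1 L,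
          Set.indicator B (fun _ => (1 : ℝ)) (iterZ T (-((ℓ : ℤ) * t n)) x)
        - (μ B).toReal| ∂μ < ε := by
  intro ε hε
  obtain ⟨L, hL⟩ := exists_nat_gt (1 / ε ^ 2)
  have hL0 : 0 < L := by exact_mod_cast (by positivity : (0 : ℝ) < 1 / ε ^ 2).trans hL
  set b := μ.real B
  have hlimit : (b - b * b) / L < ε ^ 2 := by
    have hb : b - b * b ≤ 1 := by nlinarith [sq_nonneg (b - 1 / 2)]
    calc (b - b * b) / L ≤ 1 / L := by gcongr
      _ < ε ^ 2 := (div_lt_iff₀ (by positivity)).2 ((div_lt_iff₀' (by positivity)).1 hL)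
  obtain ⟨N, hN⟩ := eventually_atTop.1 <|
    (tendsto_variance_average_indicator_image_iterZ hT hB
      (fun k hk => by simpa only [measureReal_def] using hmix k hk B B hB hB)
      hL0.ne').eventually_lt_const hlimit
  refine ⟨L, N, hL0, fun n hn => ?_⟩
  set f : X → ℝ := fun x => (1 / (L : ℝ)) *
    ∑ ℓ ∈ Finset.Icc 1 L, (iterZ T (ℓ * t n) '' B).indicator 1 x
  have hmean : μ[f] = b := by
    simp only [f, b, integral_const_mul_sum_indicator_one _ _
      fun _ => measurableSet_image_iterZ T _ hB, measureReal_image_iterZ hT _ hB,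
      Finset.sum_const, Nat.card_Icc, Nat.add_sub_cancel, nsmul_eq_mul]
    field_simp
  have hf : MemLp f 2 μ := (memLp_finsetSum _ fun ℓ _ =>
    memLp_indicator_one (measurableSet_image_iterZ T _ hB) 2).const_mul _
  have hdev := (sq_integral_abs_sub_integral_le_variance hf).trans_lt (hN n hn)
  rw [hmean] at hdev
  simpa only [← Pi.one_def, indicator_one_iterZ, neg_neg, ← measureReal_def] using
    (abs_lt_of_sq_lt_sq' hdev hε.le).2
end

section
/- Let {e_n} be a sequence of nonnegative integers and {r_n} positive integers. Define words B̃_1 = B_1 = 0, B̃_{n+1} = ∏_{i=0}^{r_n} B̃_n 1^{e_n+i}, and B_{n+1} = (∏_{i=0}^{r_n−1} B_n 1^{c_n+i}) B_n where c_1 = e_1 and c_{n+1} = e_{n+1} + c_n + r_n. Then for all n ≥ 1, B̃_{n+1} = B_{n+1} 1^{Σ_{j=1}^n (e_j + r_j)}. -/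
/-! By induction, `B̃ₙ₊₁ = Bₙ₊₁ 1^{cₙ + rₙ}`. Feeding this into the recursion for `B̃ₙ₊₂`, the trailing
spacer of each copy of `B̃ₙ₊₁` merges with the following `1^{eₙ₊₁ + i}` into `1^{cₙ₊₁ + i}`, which is
exactly the shape of `Bₙ₊₂`, and the last copy leaves `1^{cₙ₊₁ + rₙ₊₁}` behind. Finally `cₙ + rₙ`
telescopes to `∑_{j ≤ n} (e_j + r_j)`. -/

namespace List

variable {α : Type*}

theorem flatten_map_range_succ_append_replicate (w : List α) (x : α) (a m : ℕ) :
    ((range (m + 1)).map fun i => w ++ replicate (a + i) x).flatten =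
      ((range m).map fun i => w ++ replicate (a + i) x).flatten ++ w ++ replicate (a + m) x := by
  simp [range_succ, append_assoc]

theorem flatten_map_append_replicate_append_replicate (w : List α) (x : α) (a b m : ℕ) :
    ((range m).map fun i => (w ++ replicate b x) ++ replicate (a + i) x).flatten =
      ((range m).map fun i => w ++ replicate (b + a + i) x).flatten := by
  simp only [append_assoc, ← replicate_add, Nat.add_assoc]

end List

theorem add_eq_sum_Icc_of_rec (r e c : ℕ → ℕ) (hc1 : c 1 = e 1)
    (hcrec : ∀ n, 1 ≤ n → c (n + 1) = e (n + 1) + c n + r n) :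
    ∀ n, 1 ≤ n → c n + r n = ∑ j ∈ Finset.Icc 1 n, (e j + r j) := by
  intro n hn
  induction n, hn using Nat.le_induction with
  | base => simp [hc1]
  | succ n hn ih =>
    rw [hcrec n hn, Finset.sum_Icc_succ_top (by omega), ← ih]
    ring

theorem stmt_12_general (r : ℕ → ℕ) (e : ℕ → ℕ) (c : ℕ → ℕ)
    (hc1 : c 1 = e 1) (hcrec : ∀ n, 1 ≤ n → c (n + 1) = e (n + 1) + c n + r n)
    (Bt B : ℕ → List Bool) (hBt1 : Bt 1 = [false]) (hB1 : B 1 = [false])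
    (hBtrec : ∀ n, 1 ≤ n → Bt (n + 1) =
      List.flatten ((List.range (r n + 1)).map fun i => Bt n ++ List.replicate (e n + i) true))
    (hBrec : ∀ n, 1 ≤ n → B (n + 1) =
      (List.flatten ((List.range (r n)).map fun i => B n ++ List.replicate (c n + i) true))
        ++ B n) :
    ∀ n, 1 ≤ n →
      Bt (n + 1) = B (n + 1) ++ List.replicate (∑ j ∈ Finset.Icc 1 n, (e j + r j)) true := by
  suffices h : ∀ n, 1 ≤ n → Bt (n + 1) = B (n + 1) ++ List.replicate (c n + r n) true by
    intro n hn
    rw [h n hn, add_eq_sum_Icc_of_rec r e c hc1 hcrec n hn]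
  intro n hn
  induction n, hn using Nat.le_induction with
  | base =>
    rw [hBtrec 1 le_rfl, hBrec 1 le_rfl, hBt1, hB1, hc1,
      List.flatten_map_range_succ_append_replicate]
  | succ n hn ih =>
    have hc : c n + r n + e (n + 1) = c (n + 1) := by rw [hcrec n hn]; ring
    rw [hBtrec (n + 1) (by omega), hBrec (n + 1) (by omega), ih,
      List.flatten_map_append_replicate_append_replicate, hc,
      List.flatten_map_range_succ_append_replicate]

/-- Moving the spacers of an elevated staircase from the ends of the subcolumns to the
front: with `Bt 1 = B 1 = 0`, `Bt (n+1) = ∏_{i=0}^{r n} Bt n 1^{e n + i}`,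
`B (n+1) = (∏_{i=0}^{r n − 1} B n 1^{c n + i}) B n`, `c 1 = e 1` and
`c (n+1) = e (n+1) + c n + r n`, we have `Bt (n+1) = B (n+1) 1^{∑_{j=1}^n (e j + r j)}`
for all `n ≥ 1`. -/
theorem stmt_12 (r : ℕ → ℕ) (hr : ∀ n, 1 ≤ r n) (e : ℕ → ℕ) (c : ℕ → ℕ)
    (hc1 : c 1 = e 1) (hcrec : ∀ n, 1 ≤ n → c (n + 1) = e (n + 1) + c n + r n)
    (Bt B : ℕ → List Bool) (hBt1 : Bt 1 = [false]) (hB1 : B 1 = [false])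
    (hBtrec : ∀ n, 1 ≤ n → Bt (n + 1) =
      List.flatten ((List.range (r n + 1)).map fun i => Bt n ++ List.replicate (e n + i) true))
    (hBrec : ∀ n, 1 ≤ n → B (n + 1) =
      (List.flatten ((List.range (r n)).map fun i => B n ++ List.replicate (c n + i) true))
        ++ B n) :
    ∀ n, 1 ≤ n →
      Bt (n + 1) = B (n + 1) ++ List.replicate (∑ j ∈ Finset.Icc 1 n, (e j + r j)) true :=
  stmt_12_general r e c hc1 hcrec Bt B hBt1 hB1 hBtrec hBrec
end
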